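/- Naturality of the snail sequence: Let A, A′, B, B′ be pointed groupoids, F : A → B, F′ : A′ → B′, E : A′ → A, T : B′ → B pointed functors, and φ : F′ ⋙ T ⇒ E ⋙ F a natural transformation with component at the basepoint φ_{*_{A′}} = id_{*_B}. Define L : K(F′) → K(F) by L(a′, β′) = (E(a′), φ_{a′}⁻¹ ≫ T(β′)) on objects and L(f) = E(f) on morphisms. Then L is a well-defined pointed functor, and the six vertical maps π₁(L), π₁(E), π₁(T), π₀(L), π₀(E), π₀(T) constitute a morphism of complexes from the six-term snail sequence of F′ (with maps π₁(P′), π₁(F′), D′, π₀(P′), π₀(F′)) to the six-term snail sequence of F (with maps π₁(P), π₁(F), D, π₀(P), π₀(F)); in particular, π₀(L) ∘ D′ = D ∘ π₁(T). -/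

import Mathlib

open CategoryTheory

universe w v₁ v₂ v₃ v₄ u₁ u₂ u₃ u₄

namespace Snail

variable {A : Type u₁} [Groupoid.{v₁} A] {B : Type u₂} [Groupoid.{v₂} B]

/-- The set of connected components (isomorphism classes of objects) of a groupoid. -/
def Pi0 (A : Type u₁) [Groupoid.{v₁} A] : Type u₁ :=
  Quotient (CategoryTheory.isIsomorphicSetoid A)

/-- The connected component of an object. -/
def pi0 (a : A) : Pi0 A := Quotient.mk (CategoryTheory.isIsomorphicSetoid A) a

/-- The map induced on connected components by a functor; for pointed functors
between pointed groupoids this is the induced pointed map `π₀(F)`. -/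
def pi0Map (F : A ⥤ B) : Pi0 A → Pi0 B :=
  Quotient.map F.obj fun _ _ h => Nonempty.map (fun i => F.mapIso i) h

/-- The group homomorphism `π₁(F) : Aut (*_A) →* Aut (*_B)` induced by a pointed
functor `F` (with `F.obj pA = pB`). -/
def pi1Map (F : A ⥤ B) {pA : A} {pB : B} (h : F.obj pA = pB) : Aut pA →* Aut pB :=
  (Aut.autMulEquivOfIso (eqToIso h)).toMonoidHom.comp (F.mapAut pA)

/-- The strong homotopy kernel `K(F)` of a functor `F : A ⥤ B` with respect to the
basepoint `pB` of `B` : objects are pairs `(a, β : F a ⟶ pB)`. -/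
structure HKer (F : A ⥤ B) (pB : B) : Type (max u₁ v₂) where
  pt : A
  arr : F.obj pt ⟶ pB

/-- Morphisms `(a, β) ⟶ (a', β')` in `K(F)` are morphisms `f : a ⟶ a'` of `A` with
`F.map f ≫ β' = β`. -/
instance hkerGroupoid (F : A ⥤ B) (pB : B) : Groupoid (HKer F pB) where
  Hom x y := { f : x.pt ⟶ y.pt // F.map f ≫ y.arr = x.arr }
  id x := ⟨𝟙 x.pt, by simp⟩
  comp {x y z} f g := ⟨f.1 ≫ g.1, by rw [F.map_comp, Category.assoc, g.2, f.2]⟩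
  id_comp f := Subtype.ext (Category.id_comp f.1)
  comp_id f := Subtype.ext (Category.comp_id f.1)
  assoc f g h := Subtype.ext (Category.assoc f.1 g.1 h.1)
  inv {x y} f := ⟨Groupoid.inv f.1, by
    obtain ⟨g, h⟩ := f
    dsimp only
    rw [← h, ← Category.assoc, ← F.map_comp, Groupoid.inv_comp, F.map_id, Category.id_comp]⟩
  inv_comp f := Subtype.ext (Groupoid.inv_comp f.1)
  comp_inv f := Subtype.ext (Groupoid.comp_inv f.1)

/-- The projection functor `P : K(F) ⥤ A`, `(a, β) ↦ a`, `f ↦ f`. -/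
def hkerProj (F : A ⥤ B) (pB : B) : HKer F pB ⥤ A where
  obj x := x.pt
  map f := f.1
  map_id _ := rfl
  map_comp _ _ := rfl

/-- The connecting map `D : π₁(B) → π₀(K(F))`, sending `g ∈ Aut (*_B)` to the
connected component of the object `(*_A, g)` of `K(F)`. -/
def connecting (F : A ⥤ B) {pA : A} {pB : B} (hF : F.obj pA = pB) :
    Aut pB → Pi0 (HKer F pB) :=
  fun g => pi0 (⟨pA, eqToHom hF ≫ g.hom⟩ : HKer F pB)


variable {A' : Type u₃} [Groupoid.{v₃} A'] {B' : Type u₄} [Groupoid.{v₄} B']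

/-- The comparison functor `L : K(F') ⥤ K(F)` induced by a square
`φ : F' ⋙ T ⟶ E ⋙ F` : it sends `(a', β')` to `(E a', φ_{a'}⁻¹ ≫ T β')` and `f` to
`E f`. -/
def hkerComparison (F : A ⥤ B) (F' : A' ⥤ B') (E : A' ⥤ A) (T : B' ⥤ B)
    (φ : F' ⋙ T ⟶ E ⋙ F) {pB' : B'} {pB : B} (hT : T.obj pB' = pB) :
    HKer F' pB' ⥤ HKer F pB where
  obj x := ⟨E.obj x.pt, Groupoid.inv (φ.app x.pt) ≫ T.map x.arr ≫ eqToHom hT⟩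
  map {x y} m := ⟨E.map m.1, by
    obtain ⟨f, hf⟩ := m
    dsimp only
    have nat := φ.naturality f
    simp only [Functor.comp_map] at nat
    simp only [Groupoid.inv_eq_inv]
    have key : φ.app x.pt ≫ F.map (E.map f) ≫ inv (φ.app y.pt) = T.map (F'.map f) := by
      rw [← Category.assoc, ← nat, Category.assoc, IsIso.hom_inv_id, Category.comp_id]
    calc F.map (E.map f) ≫ inv (φ.app y.pt) ≫ T.map y.arr ≫ eqToHom hT
        = inv (φ.app x.pt) ≫
            (φ.app x.pt ≫ F.map (E.map f) ≫ inv (φ.app y.pt)) ≫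
              T.map y.arr ≫ eqToHom hT := by simp
      _ = inv (φ.app x.pt) ≫ T.map (F'.map f) ≫ T.map y.arr ≫ eqToHom hT := by
          rw [key]
      _ = inv (φ.app x.pt) ≫ T.map (F'.map f ≫ y.arr) ≫ eqToHom hT := by
          rw [Functor.map_comp_assoc]
      _ = inv (φ.app x.pt) ≫ T.map x.arr ≫ eqToHom hT := by rw [hf]⟩
  map_id x := Subtype.ext (E.map_id x.pt)
  map_comp f g := Subtype.ext (E.map_comp f.1 g.1)

/-!
The squares involving the projections commute because `L ⋙ P = P' ⋙ E` holds on the nose, and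
`π₀`, `π₁` are functorial. The squares involving `F`, `F'` commute because `φ` is a natural
isomorphism (we are in groupoids) that is the identity at the basepoint. For the connecting
square, the same basepoint condition makes `L` send `(*, g)` to `(*, T g)` as objects.
-/

variable {C : Type*} [Groupoid C]

lemma pi1Map_hom (F : A ⥤ B) {pA : A} {pB : B} (h : F.obj pA = pB) (k : Aut pA) :
    (pi1Map F h k).hom = eqToHom h.symm ≫ F.map k.hom ≫ eqToHom h :=
  rfl

lemma pi1Map_pi1Map (F : A ⥤ B) (G : B ⥤ C) {pA : A} {pB : B} {pC : C}
    (hF : F.obj pA = pB) (hG : G.obj pB = pC) (k : Aut pA) :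
    pi1Map G hG (pi1Map F hF k) = pi1Map (F ⋙ G) (by rw [Functor.comp_obj, hF, hG]) k := by
  subst hF hG
  ext
  simp [pi1Map_hom]

lemma pi1Map_eq_of_app_eq_eqToHom {F G : A ⥤ B} (φ : F ⟶ G) {pA : A} {pB : B}
    (hF : F.obj pA = pB) (hG : G.obj pA = pB) (hφ : φ.app pA = eqToHom (hF.trans hG.symm)) :
    pi1Map F hF = pi1Map G hG := by
  ext k
  subst hF
  have nat := φ.naturality k.hom
  rw [hφ] at nat
  simp [pi1Map_hom, ← reassoc_of% nat]

lemma pi0Map_pi0Map (F : A ⥤ B) (G : B ⥤ C) (x : Pi0 A) :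
    pi0Map G (pi0Map F x) = pi0Map (F ⋙ G) x :=
  Quotient.inductionOn x fun _ => rfl

lemma pi0Map_eq_of_natTrans {F G : A ⥤ B} (φ : F ⟶ G) : pi0Map F = pi0Map G :=
  funext fun x => Quotient.inductionOn x fun a => Quotient.sound ⟨asIso (φ.app a)⟩

lemma hkerComparison_comp_hkerProj (F : A ⥤ B) (F' : A' ⥤ B') (E : A' ⥤ A) (T : B' ⥤ B)
    (φ : F' ⋙ T ⟶ E ⋙ F) {pB' : B'} {pB : B} (hT : T.obj pB' = pB) :
    hkerComparison F F' E T φ hT ⋙ hkerProj F pB = hkerProj F' pB' ⋙ E :=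
  rfl

lemma hkerComparison_obj_mk (F : A ⥤ B) (F' : A' ⥤ B') (E : A' ⥤ A) (T : B' ⥤ B)
    {pA : A} {pB : B} {pA' : A'} {pB' : B'} (hF : F.obj pA = pB) (hF' : F'.obj pA' = pB')
    (hE : E.obj pA' = pA) (hT : T.obj pB' = pB) (φ : F' ⋙ T ⟶ E ⋙ F)
    (hφ : φ.app pA' = eqToHom (by rw [hF', hT, hE, hF] :
        T.obj (F'.obj pA') = F.obj (E.obj pA')))
    (g : pB' ⟶ pB') :
    (hkerComparison F F' E T φ hT).obj ⟨pA', eqToHom hF' ≫ g⟩ =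
      ⟨pA, eqToHom hF ≫ eqToHom hT.symm ≫ T.map g ≫ eqToHom hT⟩ := by
  subst hE hF'
  simp [hkerComparison, hφ]

/-- **Naturality of the snail sequence.** A square `φ : F' ⋙ T ⟶ E ⋙ F` of pointed
functors between pointed groupoids, with `φ` the identity at the basepoint, induces
a pointed comparison functor `L : K(F') ⥤ K(F)`, and the maps `π₁(L)`, `π₁(E)`,
`π₁(T)`, `π₀(L)`, `π₀(E)`, `π₀(T)` form a morphism of complexes from the snail
sequence of `F'` to that of `F`; in particular `π₀(L) ∘ D' = D ∘ π₁(T)`. -/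
theorem snail_sequence_naturality {A : Type u₁} [Groupoid.{v₁} A] {B : Type u₂}
    [Groupoid.{v₂} B] {A' : Type u₃} [Groupoid.{v₃} A'] {B' : Type u₄}
    [Groupoid.{v₄} B'] (F : A ⥤ B) (F' : A' ⥤ B') (E : A' ⥤ A) (T : B' ⥤ B)
    (pA : A) (pB : B) (pA' : A') (pB' : B') (hF : F.obj pA = pB)
    (hF' : F'.obj pA' = pB') (hE : E.obj pA' = pA) (hT : T.obj pB' = pB)
    (φ : F' ⋙ T ⟶ E ⋙ F)
    (hφ : φ.app pA' = eqToHom (by rw [hF', hT, hE, hF] :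
        T.obj (F'.obj pA') = F.obj (E.obj pA'))) :
    ∃ hL : (hkerComparison F F' E T φ hT).obj ⟨pA', eqToHom hF'⟩ =
        (⟨pA, eqToHom hF⟩ : HKer F pB),
      -- square with the projections, at the π₁ level
      (∀ k : Aut (⟨pA', eqToHom hF'⟩ : HKer F' pB'),
        pi1Map (hkerProj F pB) rfl (pi1Map (hkerComparison F F' E T φ hT) hL k) =
          pi1Map E hE (pi1Map (hkerProj F' pB') rfl k)) ∧
      -- square with F and F', at the π₁ level
      (∀ a : Aut pA',
        pi1Map F hF (pi1Map E hE a) = pi1Map T hT (pi1Map F' hF' a)) ∧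
      -- square with the connecting maps: π₀(L) ∘ D' = D ∘ π₁(T)
      (∀ g : Aut pB',
        pi0Map (hkerComparison F F' E T φ hT) (connecting F' hF' g) =
          connecting F hF (pi1Map T hT g)) ∧
      -- square with the projections, at the π₀ level
      (∀ x : Pi0 (HKer F' pB'),
        pi0Map (hkerProj F pB) (pi0Map (hkerComparison F F' E T φ hT) x) =
          pi0Map E (pi0Map (hkerProj F' pB') x)) ∧
      -- square with F and F', at the π₀ level
      (∀ y : Pi0 A',
        pi0Map F (pi0Map E y) = pi0Map T (pi0Map F' y)) := by
  have hL : (hkerComparison F F' E T φ hT).obj ⟨pA', eqToHom hF'⟩ = ⟨pA, eqToHom hF⟩ := by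
    simpa using hkerComparison_obj_mk F F' E T hF hF' hE hT φ hφ (𝟙 pB')
  refine ⟨hL, fun k => ?_, fun a => ?_, fun g => ?_, fun x => ?_, fun y => ?_⟩
  · rw [pi1Map_pi1Map _ _ hL rfl]
    exact (pi1Map_pi1Map (hkerProj F' pB') E (pB := pA') rfl hE k).symm
  · rw [pi1Map_pi1Map, pi1Map_pi1Map, pi1Map_eq_of_app_eq_eqToHom φ _ _ hφ]
  · exact congrArg pi0 (hkerComparison_obj_mk F F' E T hF hF' hE hT φ hφ g.hom)
  · rw [pi0Map_pi0Map, pi0Map_pi0Map, hkerComparison_comp_hkerProj]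
  · rw [pi0Map_pi0Map, pi0Map_pi0Map, pi0Map_eq_of_natTrans φ]

end Snail
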